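/- arXiv:2405.01410 — 4 statements merged into one kernel-verified Lean document; each statement's English description precedes it below -/
import Mathlib

section
/- Let ε > 0, let t, t' be real numbers, let τ ≥ 0 and d' ≥ 0, and let α, β, γ ∈ {0,1}. Suppose there exist real numbers M₁, M₂, M₃, M₄ such that: t − t' + ε ≤ M₁·α, t' − t ≤ M₂·(1 − α), t' + τ + d' − t ≤ M₃·β, t − t' − τ − d' + ε ≤ M₄·(1 − β), γ − α − β ≥ −1, and 2γ − α − β ≤ 0. Then γ = 1 if and only if t' ≤ t and t < t' + τ + d'. -/
/-!
Each big-M pair forces its binary to be an indicator: `α = 1 ↔ t' ≤ t` and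
`β = 1 ↔ t < t' + τ + d'`, the margin `ε > 0` turning a non-strict inequality into a strict one.
The two linear constraints on `γ` then make it the product `α ∧ β`.
-/

namespace BigM

variable {a b ε M M' δ : ℝ}

theorem eq_one_iff_le (hε : 0 < ε) (hδ : δ = 0 ∨ δ = 1)
    (h₁ : b - a + ε ≤ M * δ) (h₂ : a - b ≤ M' * (1 - δ)) : δ = 1 ↔ a ≤ b := by
  rcases hδ with rfl | rfl
  · simp only [mul_zero, zero_ne_one, false_iff, not_le] at h₁ ⊢
    linarith
  · simp only [sub_self, mul_zero, true_iff] at h₂ ⊢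
    linarith

theorem eq_one_iff_lt (hε : 0 < ε) (hδ : δ = 0 ∨ δ = 1)
    (h₁ : b - a ≤ M * δ) (h₂ : a - b + ε ≤ M' * (1 - δ)) : δ = 1 ↔ a < b := by
  rcases hδ with rfl | rfl
  · simp only [mul_zero, zero_ne_one, false_iff, not_lt] at h₁ ⊢
    linarith
  · simp only [sub_self, mul_zero, true_iff] at h₂ ⊢
    linarith

theorem eq_one_iff_and {α β γ : ℝ} (hα : α = 0 ∨ α = 1) (hβ : β = 0 ∨ β = 1)
    (hlow : γ - α - β ≥ -1) (hhigh : 2 * γ - α - β ≤ 0) : γ = 1 ↔ α = 1 ∧ β = 1 := by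
  constructor
  · rintro rfl
    rcases hα with rfl | rfl <;> rcases hβ with rfl | rfl <;> constructor <;> linarith
  · rintro ⟨rfl, rfl⟩
    linarith

end BigM

theorem stmt_3_general (ε t t' τ d' α β γ : ℝ) (hε : 0 < ε)
    (hα : α = 0 ∨ α = 1) (hβ : β = 0 ∨ β = 1)
    (h : ∃ M₁ M₂ M₃ M₄ : ℝ,
      t - t' + ε ≤ M₁ * α ∧
      t' - t ≤ M₂ * (1 - α) ∧
      t' + τ + d' - t ≤ M₃ * β ∧
      t - t' - τ - d' + ε ≤ M₄ * (1 - β) ∧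
      γ - α - β ≥ -1 ∧
      2 * γ - α - β ≤ 0) :
    γ = 1 ↔ (t' ≤ t ∧ t < t' + τ + d') := by
  obtain ⟨M₁, M₂, M₃, M₄, h₁, h₂, h₃, h₄, hlow, hhigh⟩ := h
  have h₄' : t - (t' + τ + d') + ε ≤ M₄ * (1 - β) := by linarith
  rw [BigM.eq_one_iff_and hα hβ hlow hhigh, BigM.eq_one_iff_le hε hα h₁ h₂,
    BigM.eq_one_iff_lt hε hβ h₃ h₄']

/-- The full big-M reformulation is exact: γ = 1 iff trip r enters arc a
while r' is traversing it, i.e., t' ≤ t < t' + τ + d'. -/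
theorem stmt_3 (ε t t' τ d' α β γ : ℝ) (hε : 0 < ε) (hτ : 0 ≤ τ) (hd' : 0 ≤ d')
    (hα : α = 0 ∨ α = 1) (hβ : β = 0 ∨ β = 1) (hγ : γ = 0 ∨ γ = 1)
    (h : ∃ M₁ M₂ M₃ M₄ : ℝ,
      t - t' + ε ≤ M₁ * α ∧
      t' - t ≤ M₂ * (1 - α) ∧
      t' + τ + d' - t ≤ M₃ * β ∧
      t - t' - τ - d' + ε ≤ M₄ * (1 - β) ∧
      γ - α - β ≥ -1 ∧
      2 * γ - α - β ≤ 0) :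
    γ = 1 ↔ (t' ≤ t ∧ t < t' + τ + d') :=
  stmt_3_general ε t t' τ d' α β γ hε hα hβ h
end

section
/- Let ε > 0, τ ≥ 0, and let t be a real number (the entry time of trip r on arc a). Let R' be a finite set (the other trips on a), and for each r' ∈ R' let t_{r'} be a real number and d_{r'} ≥ 0, and let α_{r'}, β_{r'}, γ_{r'} ∈ {0,1} satisfy, for some real M₁, M₂, M₃, M₄: t − t_{r'} + ε ≤ M₁·α_{r'}, t_{r'} − t ≤ M₂·(1 − α_{r'}), t_{r'} + τ + d_{r'} − t ≤ M₃·β_{r'}, t − t_{r'} − τ − d_{r'} + ε ≤ M₄·(1 − β_{r'}), γ_{r'} − α_{r'} − β_{r'} ≥ −1, and 2γ_{r'} − α_{r'} − β_{r'} ≤ 0. Then the sum Σ_{r' ∈ R'} γ_{r'} equals the cardinality of the set {r' ∈ R' : t_{r'} ≤ t < t_{r'} + τ + d_{r'}}, i.e., the flow variable defined as this sum equals the number of trips that r encounters on arc a. -/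
/-!
Each big-M pair pins its binary variable to an indicator: `α r' = 1` exactly when `t_{r'} ≤ t`,
and `β r' = 1` exactly when `t < t_{r'} + τ + d_{r'}` (the margin `ε > 0` excludes the boundary
case from the wrong side). The two constraints on `γ` are the standard linearization of a product
of binaries, so `γ r' = α r' * β r'` is the indicator of the conjunction, and summing indicators
counts the filtered trips.
-/

lemma eq_ite_of_bigM {x s ε M M' : ℝ} (hx : x = 0 ∨ x = 1) (hε : 0 < ε)
    (h₁ : s + ε ≤ M * x) (h₂ : -s ≤ M' * (1 - x)) :
    x = if 0 ≤ s then 1 else 0 := by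
  rcases hx with rfl | rfl
  · rw [if_neg (by linarith)]
  · rw [if_pos (by linarith)]

lemma eq_mul_of_binary_linearization {x y z : ℝ} (hx : x = 0 ∨ x = 1) (hy : y = 0 ∨ y = 1)
    (hz : z = 0 ∨ z = 1) (h₁ : z - x - y ≥ -1) (h₂ : 2 * z - x - y ≤ 0) :
    z = x * y := by
  rcases hx with rfl | rfl <;> rcases hy with rfl | rfl <;> rcases hz with rfl | rfl <;>
    linarith

theorem stmt_4_general {ι : Type*} (R' : Finset ι) (ε τ t M₁ M₂ M₃ M₄ : ℝ)
    (t' d α β γ : ι → ℝ) (hε : 0 < ε)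
    (hα : ∀ r' ∈ R', α r' = 0 ∨ α r' = 1)
    (hβ : ∀ r' ∈ R', β r' = 0 ∨ β r' = 1)
    (hγ : ∀ r' ∈ R', γ r' = 0 ∨ γ r' = 1)
    (h1 : ∀ r' ∈ R', t - t' r' + ε ≤ M₁ * α r')
    (h2 : ∀ r' ∈ R', t' r' - t ≤ M₂ * (1 - α r'))
    (h3 : ∀ r' ∈ R', t' r' + τ + d r' - t ≤ M₃ * β r')
    (h4 : ∀ r' ∈ R', t - t' r' - τ - d r' + ε ≤ M₄ * (1 - β r'))
    (h5 : ∀ r' ∈ R', γ r' - α r' - β r' ≥ -1)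
    (h6 : ∀ r' ∈ R', 2 * γ r' - α r' - β r' ≤ 0) :
    ∑ r' ∈ R', γ r' =
      ((R'.filter fun r' => t' r' ≤ t ∧ t < t' r' + τ + d r').card : ℝ) := by
  rw [← Finset.sum_boole]
  refine Finset.sum_congr rfl fun r hr => ?_
  have hα_ite : α r = if t' r ≤ t then 1 else 0 := by
    simpa only [sub_nonneg] using
      eq_ite_of_bigM (M' := M₂) (hα r hr) hε (h1 r hr) (by linarith [h2 r hr])
  have hβ_ite : β r = if t < t' r + τ + d r then 1 else 0 := by
    -- `eq_ite_of_bigM` applies to `x = 1 - β r` and `s = t - t' r - τ - d r`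
    have hβ' : 1 - β r = 0 ∨ 1 - β r = 1 := by
      rcases hβ r hr with hb | hb <;> simp [hb]
    have h := eq_ite_of_bigM (M' := M₃) hβ' hε (h4 r hr)
      (by rw [sub_sub_cancel]; linarith [h3 r hr])
    split_ifs at h ⊢ <;> linarith
  rw [eq_mul_of_binary_linearization (hα r hr) (hβ r hr) (hγ r hr) (h5 r hr) (h6 r hr),
    hα_ite, hβ_ite, ite_zero_mul_ite_zero, mul_one]

/-- The flow variable, defined as the sum of the γ variables, equals the number
of other trips r' whose traversal interval [t_{r'}, t_{r'} + τ + d_{r'}) contains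
the entry time t of trip r. -/
theorem stmt_4 {ι : Type*} (R' : Finset ι) (ε τ t M₁ M₂ M₃ M₄ : ℝ)
    (t' d α β γ : ι → ℝ) (hε : 0 < ε) (hτ : 0 ≤ τ)
    (hd : ∀ r' ∈ R', 0 ≤ d r')
    (hα : ∀ r' ∈ R', α r' = 0 ∨ α r' = 1)
    (hβ : ∀ r' ∈ R', β r' = 0 ∨ β r' = 1)
    (hγ : ∀ r' ∈ R', γ r' = 0 ∨ γ r' = 1)
    (h1 : ∀ r' ∈ R', t - t' r' + ε ≤ M₁ * α r')
    (h2 : ∀ r' ∈ R', t' r' - t ≤ M₂ * (1 - α r'))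
    (h3 : ∀ r' ∈ R', t' r' + τ + d r' - t ≤ M₃ * β r')
    (h4 : ∀ r' ∈ R', t - t' r' - τ - d r' + ε ≤ M₄ * (1 - β r'))
    (h5 : ∀ r' ∈ R', γ r' - α r' - β r' ≥ -1)
    (h6 : ∀ r' ∈ R', 2 * γ r' - α r' - β r' ≤ 0) :
    ∑ r' ∈ R', γ r' =
      ((R'.filter fun r' => t' r' ≤ t ∧ t < t' r' + τ + d r').card : ℝ) :=
  stmt_4_general R' ε τ t M₁ M₂ M₃ M₄ t' d α β γ hε hα hβ hγ h1 h2 h3 h4 h5 h6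
end

section
/- Let ε > 0, τ ≥ 0, d' ≥ 0, and let t, t' be real numbers with ⌞e⌟ ≤ t ≤ ⌜e⌝, ⌞e'⌟ ≤ t', t' + τ + d' ≤ ⌜E'⌝, and ⌜e⌝ ≤ ⌜E⌝, for real bounds ⌞e⌟, ⌜e⌝, ⌞e'⌟, ⌜E'⌝, ⌜E⌝. Set M₃ = ⌜E'⌝ − ⌞e⌟ and M₄ = ⌜E⌝ − ⌞e'⌟ + ε. If either t ≥ t' + τ + d' or t + ε ≤ t' + τ + d', then there exists β ∈ {0,1} satisfying both t' + τ + d' − t ≤ M₃·β and t − t' − τ − d' + ε ≤ M₄·(1 − β) (namely β = 0 if t ≥ t' + τ + d' and β = 1 otherwise). In particular, the tightened big-M constants M₃ and M₄ derived from the arc-specific time windows are valid. -/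
/-!
Write `s = t' + τ + d'` for the exit time of `r'`. If `r` enters after `s`, take `β = 0`: the
first constraint is `s ≤ t`, and the second holds because `t ≤ ⌜e⌝ ≤ ⌜E⌝` and `⌞e'⌟ ≤ t' ≤ s`.
If `r` enters at least `ε` before `s`, take `β = 1`: the second constraint is `t + ε ≤ s`, and
the first holds because `s ≤ ⌜E'⌝` and `⌞e⌟ ≤ t`.
-/

section BigM

variable {ε t s el eu el' Eu' Eu : ℝ}

theorem bigM_constraints_of_exit_le_entry (hst : s ≤ t) (ht : t ≤ eu) (heE : eu ≤ Eu)
    (hs : el' ≤ s) :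
    s - t ≤ (Eu' - el) * 0 ∧ t - s + ε ≤ (Eu - el' + ε) * (1 - 0) := by
  constructor <;> linarith

theorem bigM_constraints_of_entry_add_le_exit (hts : t + ε ≤ s) (ht : el ≤ t) (hs : s ≤ Eu') :
    s - t ≤ (Eu' - el) * 1 ∧ t - s + ε ≤ (Eu - el' + ε) * (1 - 1) := by
  constructor <;> linarith

end BigM

theorem stmt_6_general (ε τ d' t t' el eu el' Eu' Eu : ℝ) (hτ : 0 ≤ τ)
    (hd' : 0 ≤ d')
    (ht₁ : el ≤ t) (ht₂ : t ≤ eu) (ht'₁ : el' ≤ t')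
    (hE' : t' + τ + d' ≤ Eu') (heE : eu ≤ Eu)
    (h : t' + τ + d' ≤ t ∨ t + ε ≤ t' + τ + d') :
    ∃ β : ℝ, β = (if t' + τ + d' ≤ t then (0 : ℝ) else 1) ∧ (β = 0 ∨ β = 1) ∧
      t' + τ + d' - t ≤ (Eu' - el) * β ∧
      t - t' - τ - d' + ε ≤ (Eu - el' + ε) * (1 - β) := by
  have hsplit : t - t' - τ - d' = t - (t' + τ + d') := by ring
  rw [hsplit]
  by_cases hexit : t' + τ + d' ≤ t
  · have hlower : el' ≤ t' + τ + d' := by linarith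
    exact ⟨0, by simp [hexit], Or.inl rfl,
      bigM_constraints_of_exit_le_entry hexit ht₂ heE hlower⟩
  · exact ⟨1, by simp [hexit], Or.inr rfl,
      bigM_constraints_of_entry_add_le_exit (h.resolve_left hexit) ht₁ hE'⟩

/-- Validity of the tightened big-M constants M₃ = ⌜E'⌝ − ⌞e⌟ and
M₄ = ⌜E⌝ − ⌞e'⌟ + ε derived from arc-specific time windows: the binary variable
β = 0 if t ≥ t' + τ + d' and β = 1 otherwise satisfies both constraints. -/
theorem stmt_6 (ε τ d' t t' el eu el' Eu' Eu : ℝ) (hε : 0 < ε) (hτ : 0 ≤ τ)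
    (hd' : 0 ≤ d')
    (ht₁ : el ≤ t) (ht₂ : t ≤ eu) (ht'₁ : el' ≤ t')
    (hE' : t' + τ + d' ≤ Eu') (heE : eu ≤ Eu)
    (h : t' + τ + d' ≤ t ∨ t + ε ≤ t' + τ + d') :
    ∃ β : ℝ, β = (if t' + τ + d' ≤ t then (0 : ℝ) else 1) ∧ (β = 0 ∨ β = 1) ∧
      t' + τ + d' - t ≤ (Eu' - el) * β ∧
      t - t' - τ - d' + ε ≤ (Eu - el' + ε) * (1 - β) :=
  stmt_6_general ε τ d' t t' el eu el' Eu' Eu hτ hd' ht₁ ht₂ ht'₁ hE' heE h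
end

section
/- Let ε > 0, τ ≥ 0, d ≥ 0, and let t, t' be real numbers with t ≤ t' (trip r enters arc a before trip r'), subject to time windows e_r ≤ t ≤ e_r + S_r and e_{r'} ≤ t' ≤ e_{r'} + S_{r'} with S_r, S_{r'} ≥ 0. Let the overlap be Δ = t + τ + d − t' + ε and suppose Δ > 0 (a conflict). Define the feasible forward shift σ^f = min(e_{r'} + S_{r'} − t', Δ) and the feasible backward shift σ^b = min(t − e_r, Δ). If σ^f + σ^b ≥ Δ, then the shifted times t_new = t − (Δ − σ^f) and t'_new = t' + σ^f satisfy: e_r ≤ t_new ≤ e_r + S_r, e_{r'} ≤ t'_new ≤ e_{r'} + S_{r'}, and t'_new = t_new + τ + d + ε; in particular it is not the case that t_new ≤ t'_new < t_new + τ + d, so the conflict is resolved (with margin ε) without violating either trip's time window. -/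
/-!
Both shifts are nonnegative and fit the slack of their trip: `σ^f ≤ e_{r'} + S_{r'} − t'` by
definition, while `σ^f + σ^b ≥ Δ` gives `Δ − σ^f ≤ σ^b ≤ t − e_r` and, since `σ^b ≤ Δ`, also
`σ^f ≥ 0`. Together the two shifts widen the gap `t' − t` by exactly `Δ`, so the new gap is
`τ + d + ε`.
-/

open Set

section Shift

variable {α : Type*} [AddCommGroup α] [LinearOrder α] [IsOrderedAddMonoid α]

lemma sub_le_of_le_add_min {a b c : α} (h : a ≤ b + min c a) : a - b ≤ c :=
  sub_le_iff_le_add'.2 (h.trans (add_le_add_right (min_le_left c a) b))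

lemma nonneg_of_le_add_min {a b c : α} (h : a ≤ b + min c a) : 0 ≤ b :=
  (le_add_iff_nonneg_left a).1 (h.trans (add_le_add_right (min_le_right c a) b))

lemma sub_mem_Icc_of_le_sub {e S t s : α} (hs₀ : 0 ≤ s) (hs : s ≤ t - e) (ht : t ≤ e + S) :
    t - s ∈ Icc e (e + S) :=
  ⟨le_sub_comm.1 hs, (sub_le_self t hs₀).trans ht⟩

lemma add_mem_Icc_of_le_sub {e S t s : α} (hs₀ : 0 ≤ s) (hs : s ≤ e + S - t) (ht : e ≤ t) :
    t + s ∈ Icc e (e + S) :=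
  ⟨ht.trans (le_add_of_nonneg_right hs₀), le_sub_iff_add_le'.1 hs⟩

end Shift

theorem stmt_13_general (ε τ d t t' er er' Sr Sr' : ℝ) (hε : 0 < ε)
    (hw2 : t ≤ er + Sr) (hw3 : er' ≤ t')
    (Δ : ℝ) (hΔdef : Δ = t + τ + d - t' + ε)
    (σf σb : ℝ) (hσf : σf = min (er' + Sr' - t') Δ) (hσb : σb = min (t - er) Δ)
    (hcomp : Δ ≤ σf + σb) :
    er ≤ t - (Δ - σf) ∧ t - (Δ - σf) ≤ er + Sr ∧
    er' ≤ t' + σf ∧ t' + σf ≤ er' + Sr' ∧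
    t' + σf = (t - (Δ - σf)) + τ + d + ε ∧
    ¬(t - (Δ - σf) ≤ t' + σf ∧ t' + σf < (t - (Δ - σf)) + τ + d) := by
  rw [hσb] at hcomp
  have hback : t - (Δ - σf) ∈ Icc er (er + Sr) :=
    sub_mem_Icc_of_le_sub (sub_nonneg.2 (hσf ▸ min_le_right _ _))
      (sub_le_of_le_add_min hcomp) hw2
  have hfwd : t' + σf ∈ Icc er' (er' + Sr') :=
    add_mem_Icc_of_le_sub (nonneg_of_le_add_min hcomp) (hσf ▸ min_le_left _ _) hw3
  have hgap : t' + σf = t - (Δ - σf) + τ + d + ε := by rw [hΔdef]; ring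
  refine ⟨hback.1, hback.2, hfwd.1, hfwd.2, hgap, fun hconf => hconf.2.not_ge ?_⟩
  rw [hgap]
  exact le_add_of_nonneg_right hε.le

/-- If the feasible forward and backward shifts jointly compensate the overlap Δ,
then shifting trip r backward by Δ − σ^f and trip r' forward by σ^f resolves the
conflict (with margin ε) while respecting both trips' time windows. -/
theorem stmt_13 (ε τ d t t' er er' Sr Sr' : ℝ) (hε : 0 < ε) (hτ : 0 ≤ τ)
    (hd : 0 ≤ d) (hSr : 0 ≤ Sr) (hSr' : 0 ≤ Sr')
    (htt' : t ≤ t')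
    (hw1 : er ≤ t) (hw2 : t ≤ er + Sr) (hw3 : er' ≤ t') (hw4 : t' ≤ er' + Sr')
    (Δ : ℝ) (hΔdef : Δ = t + τ + d - t' + ε) (hΔpos : 0 < Δ)
    (σf σb : ℝ) (hσf : σf = min (er' + Sr' - t') Δ) (hσb : σb = min (t - er) Δ)
    (hcomp : Δ ≤ σf + σb) :
    er ≤ t - (Δ - σf) ∧ t - (Δ - σf) ≤ er + Sr ∧
    er' ≤ t' + σf ∧ t' + σf ≤ er' + Sr' ∧
    t' + σf = (t - (Δ - σf)) + τ + d + ε ∧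
    ¬(t - (Δ - σf) ≤ t' + σf ∧ t' + σf < (t - (Δ - σf)) + τ + d) :=
  stmt_13_general ε τ d t t' er er' Sr Sr' hε hw2 hw3 Δ hΔdef σf σb hσf hσb hcomp
end
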